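/- Let p ≥ 4 be an integer and 1 ≤ a ≤ p−2. For every integer L ≥ 1 and every real q with 0 < q < 1, B^p_{a,2}(L,3) = B^p_{a,2}(L−1,3) + q^{L+a−2} B^p_{a,1}(L−1,1) + q^{L−a+2} B̃^p_{a,3}(L−1,5). -/
import Mathlib


open Finset

noncomputable section

/-- `(q)_k = ∏_{j=1}^k (1 - q^j)`. -/
def qPoch (q : ℝ) (k : ℕ) : ℝ := ∏ j ∈ Finset.range k, (1 - q ^ (j + 1))

/-- The Andrews–Baxter `q`-trinomial coefficient `T^n(L,A)`. -/
def qTri (q : ℝ) (n : ℤ) (L : ℕ) (A : ℤ) : ℝ :=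
  if |A| ≤ (L : ℤ) then
    ∑ j ∈ Finset.range (L + 1),
      if 0 ≤ (j : ℤ) + A ∧ 0 ≤ (L : ℤ) - 2 * j - A then
        q ^ ((j : ℤ) * ((j : ℤ) + A - n)) * qPoch q L /
          (qPoch q j * qPoch q (((j : ℤ) + A).toNat) * qPoch q (((L : ℤ) - 2 * j - A).toNat))
      else 0
  else 0

/-- Bosonic polynomial `B^p_{a,b}(L,s)`. -/
def Bpoly (q : ℝ) (p a b s : ℤ) (L : ℕ) : ℝ :=
  ∑' j : ℤ,
    (q ^ (p * (p + 1) * j ^ 2 + j * ((p + 1) * a - p * s)) * qTri q 0 L (2 * p * j + a - b)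
      - q ^ ((p * j + a) * ((p + 1) * j + s)) * qTri q 0 L (2 * p * j + a + b))

/-- Bosonic polynomial `B̃^p_{a,b}(L,s)`. -/
def Btpoly (q : ℝ) (p a b s : ℤ) (L : ℕ) : ℝ :=
  ∑' j : ℤ,
    (q ^ (p * (p + 1) * j ^ 2 + j * ((p + 1) * a - p * s)) * qTri q 1 L (2 * p * j + a - b)
      - q ^ (p * (p + 1) * j ^ 2 + j * ((p + 1) * a + p * (s - 2)) + a * (s - 1) - b)
        * qTri q 1 L (2 * p * j + a + b))

def qTriTerm (q : ℝ) (n : ℤ) (L : ℕ) (A : ℤ) (j : ℕ) : ℝ :=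
  if 0 ≤ (j : ℤ) + A ∧ 0 ≤ (L : ℤ) - 2 * j - A then
    q ^ ((j : ℤ) * ((j : ℤ) + A - n)) * qPoch q L /
      (qPoch q j * qPoch q (((j : ℤ) + A).toNat) * qPoch q (((L : ℤ) - 2 * j - A).toNat))
  else 0
lemma qPoch_pos {q : ℝ} (hq0 : 0 < q) (hq1 : q < 1) (k : ℕ) : 0 < qPoch q k := by
  refine Finset.prod_pos fun j _ => ?_
  have : q ^ (j + 1) < 1 := pow_lt_one₀ hq0.le hq1 (Nat.succ_ne_zero j)
  linarith
lemma qPoch_succ (q : ℝ) (k : ℕ) : qPoch q (k + 1) = qPoch q k * (1 - q ^ (k + 1)) :=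
  Finset.prod_range_succ _ _
lemma one_sub_pow_ne {q : ℝ} (hq0 : 0 < q) (hq1 : q < 1) (k : ℕ) : 1 - q ^ (k + 1) ≠ 0 := by
  have : q ^ (k + 1) < 1 := pow_lt_one₀ hq0.le hq1 (Nat.succ_ne_zero k)
  linarith
lemma qTriTerm_eq_zero {q : ℝ} {n : ℤ} {L : ℕ} {A : ℤ} {j : ℕ}
    (h : (j : ℤ) + A < 0 ∨ (L : ℤ) - 2 * j - A < 0) : qTriTerm q n L A j = 0 := by
  unfold qTriTerm; rw [if_neg]; omega
lemma qTriTerm_eq {q : ℝ} {n : ℤ} {L : ℕ} {A : ℤ} {j : ℕ}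
    (h1 : 0 ≤ (j : ℤ) + A) (h2 : 0 ≤ (L : ℤ) - 2 * j - A) :
    qTriTerm q n L A j = q ^ ((j : ℤ) * ((j : ℤ) + A - n)) * qPoch q L /
      (qPoch q j * qPoch q (((j : ℤ) + A).toNat) * qPoch q (((L : ℤ) - 2 * j - A).toNat)) := by
  unfold qTriTerm; rw [if_pos ⟨h1, h2⟩]


lemma struct_mul (a c P D : ℝ) : a * (c * P / D) = a * c * P / D := by ring

lemma structA {D w : ℝ} (a c P : ℝ) (hD : D ≠ 0) (hw : w ≠ 0) :
    a * P / (D * w) * (c * w) = a * c * P / D := by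
  field_simp

lemma structB {D w : ℝ} (a P : ℝ) (hD : D ≠ 0) (hw : w ≠ 0) :
    a * P / (D * w) * w = a * P / D := by
  field_simp

lemma term_rec0 {q : ℝ} (hq0 : 0 < q) (hq1 : q < 1) (L : ℕ) (A : ℤ) (j : ℕ) :
    qTriTerm q 0 (L + 1) A j
      = qTriTerm q 0 L A j
        + (if j = 0 then 0 else q ^ ((L : ℤ) + 1 + A) * qTriTerm q 0 L (A + 1) (j - 1))
        + q ^ ((L : ℤ) + 1 - A) * qTriTerm q 1 L (A - 1) j := by
  have hq : q ≠ 0 := hq0.ne'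
  by_cases hg : 0 ≤ (j : ℤ) + A ∧ 0 ≤ ((L + 1 : ℕ) : ℤ) - 2 * j - A
  · have hb0 : 0 ≤ (j : ℤ) + A := hg.1
    have hm0 : 0 ≤ (L : ℤ) + 1 - 2 * j - A := by
      have := hg.2; push_cast at this; omega
    obtain ⟨b, hbz⟩ : ∃ b : ℕ, (b : ℤ) = (j : ℤ) + A := ⟨((j : ℤ) + A).toNat, Int.toNat_of_nonneg hb0⟩
    obtain ⟨m, hmz⟩ : ∃ m : ℕ, (m : ℤ) = (L : ℤ) + 1 - 2 * j - A :=
      ⟨((L : ℤ) + 1 - 2 * j - A).toNat, Int.toNat_of_nonneg hm0⟩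
    have hL1 : L + 1 = j + b + m := by omega
    have hX := (qPoch_pos hq0 hq1 j).ne'
    have hY := (qPoch_pos hq0 hq1 b).ne'
    have hZ := (qPoch_pos hq0 hq1 m).ne'
    have hLHS : qTriTerm q 0 (L + 1) A j
        = q ^ ((j : ℤ) * ((j : ℤ) + A)) * (qPoch q L * (1 - q ^ (L + 1)))
            / (qPoch q j * qPoch q b * qPoch q m) := by
      rw [qTriTerm_eq hb0 (by push_cast; omega)]
      rw [show ((j : ℤ) + A).toNat = b by omega,
        show (((L + 1 : ℕ) : ℤ) - 2 * (j : ℤ) - A).toNat = m by omega,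
        qPoch_succ, sub_zero]
    set T : ℝ := q ^ ((j : ℤ) * ((j : ℤ) + A)) * qPoch q L / (qPoch q j * qPoch q b * qPoch q m)
      with hT
    have hP1 : qTriTerm q 0 L A j = T * (1 - q ^ m) := by
      rcases m with _ | m'
      · rw [qTriTerm_eq_zero (by omega)]; simp
      · rw [qTriTerm_eq hb0 (by omega)]
        rw [show ((j : ℤ) + A).toNat = b by omega,
          show (((L : ℕ) : ℤ) - 2 * (j : ℤ) - A).toNat = m' by omega, sub_zero,
          hT, qPoch_succ q m']
        have hZ' := (qPoch_pos hq0 hq1 m').ne'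
        have hw := one_sub_pow_ne hq0 hq1 m'
        rw [show qPoch q j * qPoch q b * (qPoch q m' * (1 - q ^ (m' + 1)))
            = qPoch q j * qPoch q b * qPoch q m' * (1 - q ^ (m' + 1)) from by ring]
        rw [structB _ _ (by positivity) hw]
    have hP2 : (if j = 0 then 0 else q ^ ((L : ℤ) + 1 + A) * qTriTerm q 0 L (A + 1) (j - 1))
        = T * (q ^ (m + b) * (1 - q ^ j)) := by
      rcases j with _ | j'
      · simp
      · rw [if_neg (Nat.succ_ne_zero j')]
        simp only [Nat.add_sub_cancel]
        rw [qTriTerm_eq (by push_cast at hbz ⊢; omega) (by push_cast at hmz ⊢; omega)]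
        rw [show (((j' : ℕ) : ℤ) + (A + 1)).toNat = b by push_cast at hbz ⊢; omega,
          show (((L : ℕ) : ℤ) - 2 * ((j' : ℕ) : ℤ) - (A + 1)).toNat = m by
            push_cast at hmz ⊢; omega,
          sub_zero, hT, qPoch_succ q j']
        have hX' := (qPoch_pos hq0 hq1 j').ne'
        have hw := one_sub_pow_ne hq0 hq1 j'
        rw [show qPoch q j' * (1 - q ^ (j' + 1)) * qPoch q b * qPoch q m
            = qPoch q j' * qPoch q b * qPoch q m * (1 - q ^ (j' + 1)) from by ring]
        rw [structA _ _ _ (by positivity) hw, struct_mul]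
        have hexp : q ^ ((L : ℤ) + 1 + A) * q ^ (((j' : ℕ) : ℤ) * (((j' : ℕ) : ℤ) + (A + 1)))
            = q ^ (((j' + 1 : ℕ) : ℤ) * (((j' + 1 : ℕ) : ℤ) + A)) * q ^ (m + b) := by
          rw [← zpow_natCast q (m + b), ← zpow_add₀ hq, ← zpow_add₀ hq]
          congr 1
          have hbz' := hbz; have hmz' := hmz
          push_cast at hbz' hmz' ⊢
          linear_combination (-1 : ℤ) * hmz' - hbz'
        rw [hexp]
    have hP3 : q ^ ((L : ℤ) + 1 - A) * qTriTerm q 1 L (A - 1) j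
        = T * (q ^ m * (1 - q ^ b)) := by
      rcases b with _ | b'
      · rw [qTriTerm_eq_zero (by omega), mul_zero]; simp
      · rw [qTriTerm_eq (by omega) (by omega)]
        rw [show (((j : ℕ) : ℤ) + (A - 1)).toNat = b' by omega,
          show (((L : ℕ) : ℤ) - 2 * (j : ℤ) - (A - 1)).toNat = m by omega,
          hT, qPoch_succ q b']
        have hY' := (qPoch_pos hq0 hq1 b').ne'
        have hw := one_sub_pow_ne hq0 hq1 b'
        rw [show qPoch q j * (qPoch q b' * (1 - q ^ (b' + 1))) * qPoch q m
            = qPoch q j * qPoch q b' * qPoch q m * (1 - q ^ (b' + 1)) from by ring]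
        rw [structA _ _ _ (by positivity) hw, struct_mul]
        have hexp : q ^ ((L : ℤ) + 1 - A) * q ^ ((j : ℤ) * ((j : ℤ) + (A - 1) - 1))
            = q ^ ((j : ℤ) * ((j : ℤ) + A)) * q ^ m := by
          rw [← zpow_natCast q m, ← zpow_add₀ hq, ← zpow_add₀ hq]
          congr 1
          linear_combination (-1 : ℤ) * hmz
        rw [hexp]
    rw [hLHS, hP1, hP2, hP3, hL1, hT]
    ring
  · have hg' : (j : ℤ) + A < 0 ∨ (L : ℤ) + 1 - 2 * j - A < 0 := by
      rcases (not_and_or.mp hg) with h | h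
      · left; omega
      · right; push_cast at h; omega
    have z2 : (if j = 0 then (0:ℝ) else q ^ ((L : ℤ) + 1 + A) * qTriTerm q 0 L (A + 1) (j - 1)) = 0 := by
      rcases j with _ | j'
      · simp
      · rw [if_neg (Nat.succ_ne_zero j'),
          qTriTerm_eq_zero (by push_cast; push_cast at hg'; omega), mul_zero]
    rw [qTriTerm_eq_zero (by push_cast; omega),
      qTriTerm_eq_zero (show (j : ℤ) + A < 0 ∨ (L : ℤ) - 2 * j - A < 0 by omega),
      qTriTerm_eq_zero (show (j : ℤ) + (A - 1) < 0 ∨ (L : ℤ) - 2 * j - (A - 1) < 0 by omega),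
      z2, mul_zero]
    ring

lemma term_rec1 {q : ℝ} (hq0 : 0 < q) (hq1 : q < 1) (L : ℕ) (A : ℤ) (j : ℕ) :
    qTriTerm q 0 (L + 1) A j
      = qTriTerm q 0 L A j
        + q ^ ((L : ℤ) + 1 - A) * qTriTerm q 0 L (A - 1) j
        + (if j = 0 then 0 else q ^ ((L : ℤ)) * qTriTerm q 1 L (A + 1) (j - 1)) := by
  have hq : q ≠ 0 := hq0.ne'
  by_cases hg : 0 ≤ (j : ℤ) + A ∧ 0 ≤ ((L + 1 : ℕ) : ℤ) - 2 * j - A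
  · have hb0 : 0 ≤ (j : ℤ) + A := hg.1
    have hm0 : 0 ≤ (L : ℤ) + 1 - 2 * j - A := by
      have := hg.2; push_cast at this; omega
    obtain ⟨b, hbz⟩ : ∃ b : ℕ, (b : ℤ) = (j : ℤ) + A := ⟨((j : ℤ) + A).toNat, Int.toNat_of_nonneg hb0⟩
    obtain ⟨m, hmz⟩ : ∃ m : ℕ, (m : ℤ) = (L : ℤ) + 1 - 2 * j - A :=
      ⟨((L : ℤ) + 1 - 2 * j - A).toNat, Int.toNat_of_nonneg hm0⟩
    have hL1 : L + 1 = j + b + m := by omega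
    have hX := (qPoch_pos hq0 hq1 j).ne'
    have hY := (qPoch_pos hq0 hq1 b).ne'
    have hZ := (qPoch_pos hq0 hq1 m).ne'
    have hLHS : qTriTerm q 0 (L + 1) A j
        = q ^ ((j : ℤ) * ((j : ℤ) + A)) * (qPoch q L * (1 - q ^ (L + 1)))
            / (qPoch q j * qPoch q b * qPoch q m) := by
      rw [qTriTerm_eq hb0 (by push_cast; omega)]
      rw [show ((j : ℤ) + A).toNat = b by omega,
        show (((L + 1 : ℕ) : ℤ) - 2 * (j : ℤ) - A).toNat = m by omega,
        qPoch_succ, sub_zero]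
    set T : ℝ := q ^ ((j : ℤ) * ((j : ℤ) + A)) * qPoch q L / (qPoch q j * qPoch q b * qPoch q m)
      with hT
    have hP1 : qTriTerm q 0 L A j = T * (1 - q ^ m) := by
      rcases m with _ | m'
      · rw [qTriTerm_eq_zero (by omega)]; simp
      · rw [qTriTerm_eq hb0 (by omega)]
        rw [show ((j : ℤ) + A).toNat = b by omega,
          show (((L : ℕ) : ℤ) - 2 * (j : ℤ) - A).toNat = m' by omega, sub_zero,
          hT, qPoch_succ q m']
        have hZ' := (qPoch_pos hq0 hq1 m').ne'
        have hw := one_sub_pow_ne hq0 hq1 m'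
        rw [show qPoch q j * qPoch q b * (qPoch q m' * (1 - q ^ (m' + 1)))
            = qPoch q j * qPoch q b * qPoch q m' * (1 - q ^ (m' + 1)) from by ring]
        rw [structB _ _ (by positivity) hw]
    have hP2 : q ^ ((L : ℤ) + 1 - A) * qTriTerm q 0 L (A - 1) j
        = T * (q ^ (m + j) * (1 - q ^ b)) := by
      rcases b with _ | b'
      · rw [qTriTerm_eq_zero (by omega), mul_zero]; simp
      · rw [qTriTerm_eq (by omega) (by omega)]
        rw [show (((j : ℕ) : ℤ) + (A - 1)).toNat = b' by omega,
          show (((L : ℕ) : ℤ) - 2 * (j : ℤ) - (A - 1)).toNat = m by omega,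
          sub_zero, hT, qPoch_succ q b']
        have hY' := (qPoch_pos hq0 hq1 b').ne'
        have hw := one_sub_pow_ne hq0 hq1 b'
        rw [show qPoch q j * (qPoch q b' * (1 - q ^ (b' + 1))) * qPoch q m
            = qPoch q j * qPoch q b' * qPoch q m * (1 - q ^ (b' + 1)) from by ring]
        rw [structA _ _ _ (by positivity) hw, struct_mul]
        have hexp : q ^ ((L : ℤ) + 1 - A) * q ^ ((j : ℤ) * ((j : ℤ) + (A - 1)))
            = q ^ ((j : ℤ) * ((j : ℤ) + A)) * q ^ (m + j) := by
          rw [← zpow_natCast q (m + j), ← zpow_add₀ hq, ← zpow_add₀ hq]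
          congr 1
          push_cast
          linear_combination (-1 : ℤ) * hmz
        rw [hexp]
    have hP3 : (if j = 0 then 0 else q ^ ((L : ℤ)) * qTriTerm q 1 L (A + 1) (j - 1))
        = T * (q ^ m * (1 - q ^ j)) := by
      rcases j with _ | j'
      · simp
      · rw [if_neg (Nat.succ_ne_zero j')]
        simp only [Nat.add_sub_cancel]
        rw [qTriTerm_eq (by push_cast at hbz ⊢; omega) (by push_cast at hmz ⊢; omega)]
        rw [show (((j' : ℕ) : ℤ) + (A + 1)).toNat = b by push_cast at hbz ⊢; omega,
          show (((L : ℕ) : ℤ) - 2 * ((j' : ℕ) : ℤ) - (A + 1)).toNat = m by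
            push_cast at hmz ⊢; omega,
          hT, qPoch_succ q j']
        have hX' := (qPoch_pos hq0 hq1 j').ne'
        have hw := one_sub_pow_ne hq0 hq1 j'
        rw [show qPoch q j' * (1 - q ^ (j' + 1)) * qPoch q b * qPoch q m
            = qPoch q j' * qPoch q b * qPoch q m * (1 - q ^ (j' + 1)) from by ring]
        rw [structA _ _ _ (by positivity) hw, struct_mul]
        have hexp : q ^ ((L : ℤ)) * q ^ (((j' : ℕ) : ℤ) * (((j' : ℕ) : ℤ) + (A + 1) - 1))
            = q ^ (((j' + 1 : ℕ) : ℤ) * (((j' + 1 : ℕ) : ℤ) + A)) * q ^ (m : ℕ) := by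
          rw [← zpow_natCast q m, ← zpow_add₀ hq, ← zpow_add₀ hq]
          congr 1
          have hmz' := hmz
          push_cast at hmz' ⊢
          linear_combination (-1 : ℤ) * hmz'
        rw [hexp]
    rw [hLHS, hP1, hP2, hP3, hL1, hT]
    ring
  · have hg' : (j : ℤ) + A < 0 ∨ (L : ℤ) + 1 - 2 * j - A < 0 := by
      rcases (not_and_or.mp hg) with h | h
      · left; omega
      · right; push_cast at h; omega
    have z3 : (if j = 0 then (0:ℝ) else q ^ ((L : ℤ)) * qTriTerm q 1 L (A + 1) (j - 1)) = 0 := by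
      rcases j with _ | j'
      · simp
      · rw [if_neg (Nat.succ_ne_zero j'),
          qTriTerm_eq_zero (by push_cast; push_cast at hg'; omega), mul_zero]
    rw [qTriTerm_eq_zero (by push_cast; omega),
      qTriTerm_eq_zero (show (j : ℤ) + A < 0 ∨ (L : ℤ) - 2 * j - A < 0 by omega),
      qTriTerm_eq_zero (show (j : ℤ) + (A - 1) < 0 ∨ (L : ℤ) - 2 * j - (A - 1) < 0 by omega),
      z3, mul_zero]
    ring

lemma qTri_eq_sum (q : ℝ) (n : ℤ) (L : ℕ) (A : ℤ) :
    qTri q n L A = ∑ j ∈ Finset.range (L + 1), qTriTerm q n L A j := by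
  unfold qTri qTriTerm
  split_ifs with h
  · rfl
  · symm
    refine Finset.sum_eq_zero fun j hj => ?_
    rw [if_neg]
    intro hc
    apply h
    rw [abs_le]
    simp only [Finset.mem_range] at hj
    omega
lemma qTri_eq_zero {q : ℝ} {n : ℤ} {L : ℕ} {A : ℤ} (h : (L : ℤ) < |A|) : qTri q n L A = 0 := by
  unfold qTri
  rw [if_neg (by omega)]

lemma qTri_rec0 {q : ℝ} (hq0 : 0 < q) (hq1 : q < 1) (L : ℕ) (A : ℤ) :
    qTri q 0 (L + 1) A
      = qTri q 0 L A + q ^ ((L : ℤ) + 1 + A) * qTri q 0 L (A + 1)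
        + q ^ ((L : ℤ) + 1 - A) * qTri q 1 L (A - 1) := by
  rw [qTri_eq_sum, qTri_eq_sum, qTri_eq_sum, qTri_eq_sum]
  rw [show L + 1 + 1 = (L + 1) + 1 from rfl]
  rw [Finset.sum_congr rfl (fun j _ => term_rec0 hq0 hq1 L A j)]
  rw [Finset.sum_add_distrib, Finset.sum_add_distrib]
  congr 1
  · congr 1
    · rw [Finset.sum_range_succ, qTriTerm_eq_zero (by push_cast; omega), add_zero]
    · rw [Finset.sum_range_succ', if_pos rfl, add_zero]
      refine (Finset.sum_congr rfl fun j _ => ?_).trans (Finset.mul_sum _ _ _).symm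
      rw [if_neg (Nat.succ_ne_zero j)]
      simp only [Nat.add_sub_cancel]
  · rw [Finset.sum_range_succ, qTriTerm_eq_zero (by push_cast; omega), mul_zero, add_zero,
      ← Finset.mul_sum]


lemma qTri_rec1 {q : ℝ} (hq0 : 0 < q) (hq1 : q < 1) (L : ℕ) (A : ℤ) :
    qTri q 0 (L + 1) A
      = qTri q 0 L A + q ^ ((L : ℤ) + 1 - A) * qTri q 0 L (A - 1)
        + q ^ ((L : ℤ)) * qTri q 1 L (A + 1) := by
  rw [qTri_eq_sum, qTri_eq_sum, qTri_eq_sum, qTri_eq_sum]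
  rw [show L + 1 + 1 = (L + 1) + 1 from rfl]
  rw [Finset.sum_congr rfl (fun j _ => term_rec1 hq0 hq1 L A j)]
  rw [Finset.sum_add_distrib, Finset.sum_add_distrib]
  congr 1
  · congr 1
    · rw [Finset.sum_range_succ, qTriTerm_eq_zero (by push_cast; omega), add_zero]
    · rw [Finset.sum_range_succ, qTriTerm_eq_zero (by push_cast; omega), mul_zero, add_zero,
        ← Finset.mul_sum]
  · rw [Finset.sum_range_succ', if_pos rfl, add_zero]
    refine (Finset.sum_congr rfl fun j _ => ?_).trans (Finset.mul_sum _ _ _).symm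
    rw [if_neg (Nat.succ_ne_zero j)]
    simp only [Nat.add_sub_cancel]

lemma summable_poly {q : ℝ} (p a b : ℤ) (hp : 4 ≤ p) (n : ℤ) (N : ℕ) (f g : ℤ → ℝ) :
    Summable (fun j : ℤ =>
      f j * qTri q n N (2 * p * j + a - b) - g j * qTri q n N (2 * p * j + a + b)) := by
  apply summable_of_ne_finset_zero
    (s := Finset.Icc (-((N : ℤ) + |a| + |b|)) ((N : ℤ) + |a| + |b|))
  intro j hj
  have hj' : (N : ℤ) + |a| + |b| < |j| := by
    simp only [Finset.mem_Icc, not_and_or, not_le] at hj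
    rcases abs_cases j with ⟨h1, h2⟩ | ⟨h1, h2⟩ <;> rcases hj with h | h <;> omega
  have h8 : 8 * |j| ≤ |2 * p * j| := by
    rw [abs_mul, abs_of_nonneg (show (0:ℤ) ≤ 2 * p by omega)]
    have := abs_nonneg j
    nlinarith
  have hNa : (N : ℤ) < |2 * p * j + a - b| := by
    have h2 : |2 * p * j| ≤ |2 * p * j + a - b| + |a - b| := by
      have := abs_add_le (2 * p * j + a - b) (b - a)
      rw [show 2 * p * j + a - b + (b - a) = 2 * p * j by ring] at this
      simpa [abs_sub_comm] using this
    have h3 : |a - b| ≤ |a| + |b| := abs_sub _ _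
    have h0 : (0:ℤ) ≤ (N:ℤ) := Int.ofNat_nonneg N
    have ha := abs_nonneg a; have hb := abs_nonneg b
    linarith
  have hNb : (N : ℤ) < |2 * p * j + a + b| := by
    have h2 : |2 * p * j| ≤ |2 * p * j + a + b| + |a + b| := by
      have := abs_add_le (2 * p * j + a + b) (-(a + b))
      rw [show 2 * p * j + a + b + -(a + b) = 2 * p * j by ring, abs_neg] at this
      exact this
    have h3 : |a + b| ≤ |a| + |b| := abs_add_le _ _
    have h0 : (0:ℤ) ≤ (N:ℤ) := Int.ofNat_nonneg N
    have ha := abs_nonneg a; have hb := abs_nonneg b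
    linarith
  rw [qTri_eq_zero hNa, qTri_eq_zero hNb, mul_zero, mul_zero, sub_zero]

/-- For integers `p ≥ 4`, `1 ≤ a ≤ p-2`, every `L ≥ 1` and `0 < q < 1`:
`B^p_{a,2}(L,3) = B^p_{a,2}(L-1,3) + q^{L+a-2} B^p_{a,1}(L-1,1) + q^{L-a+2} B̃^p_{a,3}(L-1,5)`. -/
theorem Bpoly_recurrence_a2_s3 (p a : ℤ) (hp : 4 ≤ p) (ha1 : 1 ≤ a) (ha2 : a ≤ p - 2)
    (L : ℕ) (hL : 1 ≤ L) (q : ℝ) (hq0 : 0 < q) (hq1 : q < 1) :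
    Bpoly q p a 2 3 L
      = Bpoly q p a 2 3 (L - 1) + q ^ ((L : ℤ) + a - 2) * Bpoly q p a 1 1 (L - 1)
        + q ^ ((L : ℤ) - a + 2) * Btpoly q p a 3 5 (L - 1) := by
  have hq : q ≠ 0 := hq0.ne'
  obtain ⟨N, rfl⟩ : ∃ N, L = N + 1 := ⟨L - 1, by omega⟩
  simp only [Nat.add_sub_cancel]
  unfold Bpoly Btpoly
  set c1 : ℝ := q ^ (((N + 1 : ℕ) : ℤ) + a - 2) with hc1
  set c2 : ℝ := q ^ (((N + 1 : ℕ) : ℤ) - a + 2) with hc2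
  have key : ∀ j : ℤ,
      q ^ (p * (p + 1) * j ^ 2 + j * ((p + 1) * a - p * 3)) * qTri q 0 (N + 1) (2 * p * j + a - 2)
        - q ^ ((p * j + a) * ((p + 1) * j + 3)) * qTri q 0 (N + 1) (2 * p * j + a + 2)
      = (q ^ (p * (p + 1) * j ^ 2 + j * ((p + 1) * a - p * 3)) * qTri q 0 N (2 * p * j + a - 2)
          - q ^ ((p * j + a) * ((p + 1) * j + 3)) * qTri q 0 N (2 * p * j + a + 2))
        + (c1 * (q ^ (p * (p + 1) * j ^ 2 + j * ((p + 1) * a - p * 1)) * qTri q 0 N (2 * p * j + a - 1)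
              - q ^ ((p * j + a) * ((p + 1) * j + 1)) * qTri q 0 N (2 * p * j + a + 1))
          + c2 * (q ^ (p * (p + 1) * j ^ 2 + j * ((p + 1) * a - p * 5)) * qTri q 1 N (2 * p * j + a - 3)
              - q ^ (p * (p + 1) * j ^ 2 + j * ((p + 1) * a + p * (5 - 2)) + a * (5 - 1) - 3)
                * qTri q 1 N (2 * p * j + a + 3))) := by
    intro j
    rw [qTri_rec0 hq0 hq1 N (2 * p * j + a - 2), qTri_rec1 hq0 hq1 N (2 * p * j + a + 2)]
    rw [show 2 * p * j + a - 2 + 1 = 2 * p * j + a - 1 from by ring,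
      show 2 * p * j + a - 2 - 1 = 2 * p * j + a - 3 from by ring,
      show 2 * p * j + a + 2 - 1 = 2 * p * j + a + 1 from by ring,
      show 2 * p * j + a + 2 + 1 = 2 * p * j + a + 3 from by ring]
    rw [hc1, hc2]
    have h1 : q ^ (p * (p + 1) * j ^ 2 + j * ((p + 1) * a - p * 3))
          * q ^ ((N : ℤ) + 1 + (2 * p * j + a - 2))
        = q ^ (((N + 1 : ℕ) : ℤ) + a - 2)
          * q ^ (p * (p + 1) * j ^ 2 + j * ((p + 1) * a - p * 1)) := by
      rw [← zpow_add₀ hq, ← zpow_add₀ hq]; congr 1; push_cast; ring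
    have h2 : q ^ ((p * j + a) * ((p + 1) * j + 3))
          * q ^ ((N : ℤ) + 1 - (2 * p * j + a + 2))
        = q ^ (((N + 1 : ℕ) : ℤ) + a - 2) * q ^ ((p * j + a) * ((p + 1) * j + 1)) := by
      rw [← zpow_add₀ hq, ← zpow_add₀ hq]; congr 1; push_cast; ring
    have h3 : q ^ (p * (p + 1) * j ^ 2 + j * ((p + 1) * a - p * 3))
          * q ^ ((N : ℤ) + 1 - (2 * p * j + a - 2))
        = q ^ (((N + 1 : ℕ) : ℤ) - a + 2)
          * q ^ (p * (p + 1) * j ^ 2 + j * ((p + 1) * a - p * 5)) := by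
      rw [← zpow_add₀ hq, ← zpow_add₀ hq]; congr 1; push_cast; ring
    have h4 : q ^ ((p * j + a) * ((p + 1) * j + 3)) * q ^ ((N : ℤ))
        = q ^ (((N + 1 : ℕ) : ℤ) - a + 2)
          * q ^ (p * (p + 1) * j ^ 2 + j * ((p + 1) * a + p * (5 - 2)) + a * (5 - 1) - 3) := by
      rw [← zpow_add₀ hq, ← zpow_add₀ hq]; congr 1; push_cast; ring
    linear_combination qTri q 0 N (2 * p * j + a - 1) * h1 - qTri q 0 N (2 * p * j + a + 1) * h2
      + qTri q 1 N (2 * p * j + a - 3) * h3 - qTri q 1 N (2 * p * j + a + 3) * h4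
  have hG : Summable (fun j : ℤ =>
      q ^ (p * (p + 1) * j ^ 2 + j * ((p + 1) * a - p * 3)) * qTri q 0 N (2 * p * j + a - 2)
        - q ^ ((p * j + a) * ((p + 1) * j + 3)) * qTri q 0 N (2 * p * j + a + 2)) :=
    summable_poly p a 2 hp 0 N _ _
  have hH : Summable (fun j : ℤ =>
      q ^ (p * (p + 1) * j ^ 2 + j * ((p + 1) * a - p * 1)) * qTri q 0 N (2 * p * j + a - 1)
        - q ^ ((p * j + a) * ((p + 1) * j + 1)) * qTri q 0 N (2 * p * j + a + 1)) :=
    summable_poly p a 1 hp 0 N _ _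
  have hK : Summable (fun j : ℤ =>
      q ^ (p * (p + 1) * j ^ 2 + j * ((p + 1) * a - p * 5)) * qTri q 1 N (2 * p * j + a - 3)
        - q ^ (p * (p + 1) * j ^ 2 + j * ((p + 1) * a + p * (5 - 2)) + a * (5 - 1) - 3)
          * qTri q 1 N (2 * p * j + a + 3)) :=
    summable_poly p a 3 hp 1 N _ _
  rw [tsum_congr key, Summable.tsum_add hG ((hH.mul_left c1).add (hK.mul_left c2)),
    Summable.tsum_add (hH.mul_left c1) (hK.mul_left c2), tsum_mul_left, tsum_mul_left]
  ring
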